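/- arXiv:1410.5967 — 2 statements merged into one kernel-verified Lean document; each statement's English description precedes it below -/
import Mathlib

section
/- Let b ≥ 1 be an integer and let (X_i)_{i∈ℤ} be nonnegative integers satisfying ∑_{i=0}^{N−1}(b − X_{−i}) → ∞ as N → ∞. Then the two-sided equations H_i = X_i + Q_{i−1} and Q_i = (H_i − b)_+ for i ∈ ℤ have a solution given by H_i = b + max_{j < i} ∑_{k=j+1}^{i}(X_k − b) and Q_i = max_{j ≤ i} ∑_{k=j+1}^{i}(X_k − b), where the maxima are over all integers j < i (resp. j ≤ i) and are attained. This solution is pointwise minimal among all solutions; moreover, for each i ∈ ℤ there exists i_0 < i with H_{i_0} < b and Q_{i_0} = 0; and it is the unique solution with the property that for every i there exists i_0 < i with Q_{i_0} = 0. -/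
open MeasureTheory ProbabilityTheory Filter Finset Complex

noncomputable section

/-- The tree function `T(z) = ∑_{n ≥ 1} n^{n-1} z^n / n!`. -/
def treeT (z : ℂ) : ℂ :=
  ∑' n : ℕ, ((n + 1 : ℂ) ^ n / (Nat.factorial (n + 1) : ℂ)) * z ^ (n + 1)

/-- `ω = e^{2πi/b}`, a primitive `b`-th root of unity. -/
def omegaRoot (b : ℕ) : ℂ := Complex.exp (2 * Real.pi * Complex.I / b)

/-- `ζ_ℓ(q) = T(ω^ℓ α e^{-α} q^{1/b}) / α`, where `w` is the chosen value of `q^{1/b}`. -/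
def zetaFun (b : ℕ) (α : ℝ) (ℓ : ℕ) (w : ℂ) : ℂ :=
  treeT (omegaRoot b ^ ℓ * ((α : ℂ) * (Real.exp (-α) : ℝ)) * w) / (α : ℂ)

/-- `ζ_ℓ = ζ_ℓ(1) = T(ω^ℓ α e^{-α})/α`. -/
def zetaL (b : ℕ) (α : ℝ) (ℓ : ℕ) : ℂ := zetaFun b α ℓ 1

/-- `T₀(bα) = b(1-α)/∏_{ℓ=1}^{b-1}(1-ζ_ℓ)`. -/
def T0 (b : ℕ) (α : ℝ) : ℂ :=
  (b : ℂ) * (1 - (α : ℂ)) / ∏ ℓ ∈ Finset.Ico 1 b, (1 - zetaL b α ℓ)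

/-! ### The exact (cyclic) model -/

/-- The number of keys with hash address `i` (cyclically), for the hash function `h`. -/
def Xex (m n : ℕ) (h : Fin n → ZMod m) (i : ℤ) : ℕ :=
  Nat.card {k : Fin n // h k = (i : ZMod m)}

/-- The overflow from bucket `i`: `Q_i = max_{j ≤ i} ∑_{k=j+1}^i (X_k - b)`. -/
def Qex (b m n : ℕ) (h : Fin n → ZMod m) (i : ℤ) : ℤ :=
  sSup {x : ℤ | ∃ j ≤ i, x = ∑ k ∈ Finset.Ioc j i, ((Xex m n h k : ℤ) - (b : ℤ))}

/-- The profile: `H_i = X_i + Q_{i-1}`. -/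
def Hex (b m n : ℕ) (h : Fin n → ZMod m) (i : ℤ) : ℤ :=
  (Xex m n h i : ℤ) + Qex b m n h (i - 1)

/-- The length of the block ending at bucket `m`: `m - i` where `i` is the largest index with
`1 ≤ i < m` and `H_i < b`, and `m` if there is no such index (`sSup ∅ = 0`). -/
def blockEndLen (b m n : ℕ) (h : Fin n → ZMod m) : ℕ :=
  m - sSup {i : ℕ | 1 ≤ i ∧ i < m ∧ Hex b m n h i < (b : ℤ)}

/-! ### The parking model -/

/-- The overflow sequence in the parking problem: `Q_0 = 0`,
`Q_{i+1} = (Q_i + X_{i+1} - b)₊` where buckets are numbered `0, …, m-1`. -/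
def parkQ (b : ℕ) {n : ℕ} (f : Fin n → ℕ) : ℕ → ℕ
  | 0 => 0
  | i + 1 => parkQ b f i + (Finset.univ.filter fun k => f k = i).card - b

/-! ### The infinite Poisson models -/

/-- Two-sided overflow: `Q_i = sup_{j ≤ i} ∑_{k=j+1}^i (X_k - b)`. -/
def Qpoi (b : ℕ) {Ω : Type*} (X : ℤ → Ω → ℕ) (i : ℤ) (ω : Ω) : ℤ :=
  sSup {x : ℤ | ∃ j ≤ i, x = ∑ k ∈ Finset.Ioc j i, ((X k ω : ℤ) - (b : ℤ))}

/-- Two-sided profile: `H_i = X_i + Q_{i-1}`. -/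
def Hpoi (b : ℕ) {Ω : Type*} (X : ℤ → Ω → ℕ) (i : ℤ) (ω : Ω) : ℤ :=
  (X i ω : ℤ) + Qpoi b X (i - 1) ω

/-- Each `X i` is Poisson distributed with parameter `r`. -/
def IsPoissonFam {Ω : Type*} [MeasurableSpace Ω] (μ : Measure Ω) (r : ℝ)
    {ι : Type*} (X : ι → Ω → ℕ) : Prop :=
  ∀ i k, μ {ω | X i ω = k} = ENNReal.ofReal (Real.exp (-r) * r ^ k / (Nat.factorial k))

/-- One-sided partial sums `S_i = X_1 + ⋯ + X_i`. -/
def S1 {Ω : Type*} (X : ℕ → Ω → ℕ) (i : ℕ) (ω : Ω) : ℕ := ∑ k ∈ Finset.Icc 1 i, X k ω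

/-- First-block length `B = min {i ≥ 1 : S_i < bi}`. -/
def blockB (b : ℕ) {Ω : Type*} (X : ℕ → Ω → ℕ) (ω : Ω) : ℕ :=
  sInf {i : ℕ | 1 ≤ i ∧ S1 X i ω < b * i}

/-- `Y_B = S_B - (B-1)b`, the number of keys in the final bucket of the first block. -/
def blockY (b : ℕ) {Ω : Type*} (X : ℕ → Ω → ℕ) (ω : Ω) : ℕ :=
  S1 X (blockB b X ω) ω - (blockB b X ω - 1) * b

end

/-- Two-sided explicit overflow `Q_i = max_{j ≤ i} ∑_{k=j+1}^i (X_k - b)`. -/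
noncomputable def sol2Q (b : ℕ) (X : ℤ → ℕ) (i : ℤ) : ℤ :=
  sSup {x : ℤ | ∃ j ≤ i, x = ∑ k ∈ Finset.Ioc j i, ((X k : ℤ) - (b : ℤ))}

/-- Two-sided explicit profile `H_i = b + max_{j < i} ∑_{k=j+1}^i (X_k - b)`. -/
noncomputable def sol2H (b : ℕ) (X : ℤ → ℕ) (i : ℤ) : ℤ :=
  (b : ℤ) + sSup {x : ℤ | ∃ j < i, x = ∑ k ∈ Finset.Ioc j i, ((X k : ℤ) - (b : ℤ))}

/-!
Write `S(j, i) = ∑_{j < k ≤ i} (X_k - b)`. The hypothesis says `S(j, i) → -∞` as `j → -∞`, so the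
maxima defining `Q_i` and `H_i` are attained, and since `S(j, i) = S(j, i - 1) + X_i - b`, taking
the maximum over `j ≤ i - 1` and over `j = i` separately gives the two equations. Any solution
satisfies `Q_i ≥ Q_j + S(j, i) ≥ S(j, i)`, hence dominates the explicit one. If `j` is the
leftmost maximiser of `S(·, i - 1)`, then `S(j', j) < 0` for all `j' < j`, so `H_j < b`.
Finally, the map `q ↦ (q + X_i - b)₊` is monotone, so a solution vanishing at some `i₀` stays
below the explicit solution (which is `≥ 0` there) from `i₀` on; this gives uniqueness.
-/

section IntervalSums

variable {M : Type*} [AddCommMonoid M]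

theorem sum_Ioc_add_sum_Ioc {α : Type*} [LinearOrder α] [LocallyFiniteOrder α] (f : α → M)
    {j m i : α} (hjm : j ≤ m) (hmi : m ≤ i) :
    ∑ k ∈ Ioc j m, f k + ∑ k ∈ Ioc m i, f k = ∑ k ∈ Ioc j i, f k := by
  rw [← sum_union (Ioc_disjoint_Ioc_of_le le_rfl), Ioc_union_Ioc_eq_Ioc hjm hmi]

theorem sum_Ioc_eq_sum_Ioc_sub_one_add (f : ℤ → M) {j i : ℤ} (hji : j < i) :
    ∑ k ∈ Ioc j i, f k = ∑ k ∈ Ioc j (i - 1), f k + f i := by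
  have hsingle : Ioc (i - 1) i = {i} := by ext k; simp only [mem_Ioc, mem_singleton]; omega
  rw [← sum_Ioc_add_sum_Ioc f (by omega : j ≤ i - 1) (by omega : i - 1 ≤ i), hsingle,
    sum_singleton]

theorem sum_Ioc_neg_natCast_zero (f : ℤ → M) (N : ℕ) :
    ∑ k ∈ Ioc (-(N : ℤ)) 0, f k = ∑ n ∈ range N, f (-n) :=
  sum_nbij' (fun k => (-k).toNat) (fun n => -(n : ℤ))
    (fun k hk => by simp only [mem_Ioc, mem_range] at hk ⊢; omega)
    (fun n hn => by simp only [mem_Ioc, mem_range] at hn ⊢; omega)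
    (fun k hk => by simp only [mem_Ioc] at hk; omega)
    (fun n _ => by omega)
    (fun k hk => by simp only [mem_Ioc] at hk; congr; omega)

theorem tendsto_sum_Ioc_atBot {f : ℤ → ℤ}
    (hf : Tendsto (fun N : ℕ => ∑ n ∈ range N, f (-n)) atTop atBot) (i : ℤ) :
    Tendsto (fun j => ∑ k ∈ Ioc j i, f k) atBot atBot := by
  have hzero : Tendsto (fun j => ∑ k ∈ Ioc j 0, f k) atBot atBot := by
    refine tendsto_atBot_atBot.2 fun c => ?_
    obtain ⟨N, hN⟩ := tendsto_atTop_atBot.1 hf c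
    refine ⟨-N, fun j hj => ?_⟩
    have hj : j = -((-j).toNat : ℤ) := by omega
    rw [hj, sum_Ioc_neg_natCast_zero]
    exact hN _ (by omega)
  set m := min i 0
  refine (tendsto_atBot_add_const_right _ (∑ k ∈ Ioc m i, f k - ∑ k ∈ Ioc m 0, f k)
    hzero).congr' (eventually_atBot.2 ⟨m, fun j hj => ?_⟩)
  have h₁ := sum_Ioc_add_sum_Ioc f hj (min_le_left i 0)
  have h₂ := sum_Ioc_add_sum_Ioc f hj (min_le_right i 0)
  linarith

end IntervalSums

theorem Int.exists_leftmost_max_of_tendsto_atBot {g : ℤ → ℤ} (hg : Tendsto g atBot atBot)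
    (i : ℤ) : ∃ j ≤ i, (∀ j' ≤ i, g j' ≤ g j) ∧ ∀ j' < j, g j' < g j := by
  obtain ⟨L, hL⟩ := eventually_atBot.1 (tendsto_atBot.1 hg (g i - 1))
  obtain ⟨m, hm, hmax⟩ := (Icc (min L i) i).exists_max_image g ⟨i, by simp⟩
  have hm_max : ∀ j' ≤ i, g j' ≤ g m := fun j' hj' => by
    by_cases h : j' < min L i
    · have := hL j' (by omega)
      have := hmax i (by simp)
      omega
    · exact hmax j' (mem_Icc.2 ⟨by omega, hj'⟩)
  obtain ⟨j, ⟨hji, hj⟩, hleast⟩ := Int.exists_least_of_bdd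
    (P := fun j => j ≤ i ∧ ∀ j' ≤ i, g j' ≤ g j)
    ⟨L, fun z hz => by
      by_contra! hzL
      have := hL z hzL.le
      have := hz.2 i le_rfl
      omega⟩
    ⟨m, (mem_Icc.1 hm).2, hm_max⟩
  refine ⟨j, hji, hj, fun j' hj' => (hj j' (by omega)).lt_of_ne fun heq => ?_⟩
  have := hleast j' ⟨by omega, fun k hk => heq ▸ hj k hk⟩
  omega

def SolvesProbing (b : ℕ) (X : ℤ → ℕ) (H Q : ℤ → ℤ) : Prop :=
  ∀ i : ℤ, H i = (X i : ℤ) + Q (i - 1) ∧ Q i = max (H i - (b : ℤ)) 0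

section Solution

variable {b : ℕ} {X : ℤ → ℕ}

theorem sol2Q_eq {i j : ℤ} (hji : j ≤ i)
    (hj : ∀ j' ≤ i, ∑ k ∈ Ioc j' i, ((X k : ℤ) - b) ≤
      ∑ k ∈ Ioc j i, ((X k : ℤ) - b)) :
    sol2Q b X i = ∑ k ∈ Ioc j i, ((X k : ℤ) - b) :=
  IsGreatest.csSup_eq ⟨⟨j, hji, rfl⟩, by rintro _ ⟨j', hj', rfl⟩; exact hj j' hj'⟩

theorem sol2H_eq {i j : ℤ} (hji : j < i)
    (hj : ∀ j' < i, ∑ k ∈ Ioc j' i, ((X k : ℤ) - b) ≤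
      ∑ k ∈ Ioc j i, ((X k : ℤ) - b)) :
    sol2H b X i = b + ∑ k ∈ Ioc j i, ((X k : ℤ) - b) :=
  congrArg ((b : ℤ) + ·) <|
    IsGreatest.csSup_eq ⟨⟨j, hji, rfl⟩, by rintro _ ⟨j', hj', rfl⟩; exact hj j' hj'⟩

variable (hX : ∀ i, Tendsto (fun j => ∑ k ∈ Ioc j i, ((X k : ℤ) - b)) atBot atBot)
include hX

theorem exists_sol2Q_eq (i : ℤ) : ∃ j ≤ i,
    (∀ j' ≤ i, ∑ k ∈ Ioc j' i, ((X k : ℤ) - b) ≤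
      ∑ k ∈ Ioc j i, ((X k : ℤ) - b)) ∧
      sol2Q b X i = ∑ k ∈ Ioc j i, ((X k : ℤ) - b) := by
  obtain ⟨j, hji, hj, -⟩ := Int.exists_leftmost_max_of_tendsto_atBot (hX i) i
  exact ⟨j, hji, hj, sol2Q_eq hji hj⟩

theorem exists_sol2H_eq_and_sol2Q_sub_one_eq (i : ℤ) : ∃ j < i,
    (∀ j' < i, ∑ k ∈ Ioc j' i, ((X k : ℤ) - b) ≤ ∑ k ∈ Ioc j i, ((X k : ℤ) - b)) ∧
      sol2H b X i = b + ∑ k ∈ Ioc j i, ((X k : ℤ) - b) ∧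
      sol2Q b X (i - 1) = ∑ k ∈ Ioc j (i - 1), ((X k : ℤ) - b) := by
  obtain ⟨j, hji, hj⟩ := exists_sol2Q_eq hX (i - 1)
  have hj' : ∀ j' < i,
      ∑ k ∈ Ioc j' i, ((X k : ℤ) - b) ≤ ∑ k ∈ Ioc j i, ((X k : ℤ) - b) :=
    fun j' hj' => by
      rw [sum_Ioc_eq_sum_Ioc_sub_one_add _ hj',
        sum_Ioc_eq_sum_Ioc_sub_one_add _ (hji.trans_lt (sub_one_lt i))]
      linarith [hj.1 j' (by omega)]
  exact ⟨j, by omega, hj', sol2H_eq (by omega) hj', hj.2⟩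

theorem sol2H_eq_add_sol2Q (i : ℤ) : sol2H b X i = X i + sol2Q b X (i - 1) := by
  obtain ⟨j, hji, -, hH, hQ⟩ := exists_sol2H_eq_and_sol2Q_sub_one_eq hX i
  rw [hH, hQ, sum_Ioc_eq_sum_Ioc_sub_one_add _ hji]
  ring

theorem sol2Q_eq_max (i : ℤ) : sol2Q b X i = max (sol2H b X i - b) 0 := by
  obtain ⟨jQ, hjQ, hmaxQ, hQ⟩ := exists_sol2Q_eq hX i
  obtain ⟨jH, hjH, hmaxH, hH, -⟩ := exists_sol2H_eq_and_sol2Q_sub_one_eq hX i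
  have hQH := hmaxQ jH hjH.le
  have hQ0 := hmaxQ i le_rfl
  rw [Ioc_self, sum_empty] at hQ0
  rcases hjQ.lt_or_eq with hlt | rfl
  · have := hmaxH jQ hlt
    omega
  · rw [Ioc_self, sum_empty] at hQ hQH
    omega

theorem solvesProbing_sol2 : SolvesProbing b X (sol2H b X) (sol2Q b X) :=
  fun i => ⟨sol2H_eq_add_sol2Q hX i, sol2Q_eq_max hX i⟩

theorem sol2Q_nonneg (i : ℤ) : 0 ≤ sol2Q b X i := by
  rw [sol2Q_eq_max hX]
  exact le_max_right _ _

theorem exists_sol2H_lt_and_sol2Q_eq_zero (i : ℤ) :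
    ∃ i₀ < i, sol2H b X i₀ < b ∧ sol2Q b X i₀ = 0 := by
  obtain ⟨j, hji, -, hleft⟩ := Int.exists_leftmost_max_of_tendsto_atBot (hX (i - 1)) (i - 1)
  obtain ⟨j₁, hj₁, -, hH, -⟩ := exists_sol2H_eq_and_sol2Q_sub_one_eq hX j
  have hneg : ∑ k ∈ Ioc j₁ j, ((X k : ℤ) - b) < 0 := by
    have := sum_Ioc_add_sum_Ioc (fun k => (X k : ℤ) - b) hj₁.le hji
    have := hleft j₁ hj₁
    linarith
  have hHlt : sol2H b X j < b := by omega
  exact ⟨j, by omega, hHlt, by rw [sol2Q_eq_max hX]; omega⟩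

end Solution

namespace SolvesProbing

variable {b : ℕ} {X : ℤ → ℕ} {H Q : ℤ → ℤ}

theorem eq_max (h : SolvesProbing b X H Q) (i : ℤ) : Q i = max (Q (i - 1) + X i - b) 0 := by
  obtain ⟨hH, hQ⟩ := h i
  rw [hQ, hH]
  ring_nf

theorem add_sum_Ioc_le (h : SolvesProbing b X H Q) {j i : ℤ} (hji : j ≤ i) :
    Q j + ∑ k ∈ Ioc j i, ((X k : ℤ) - b) ≤ Q i := by
  induction i, hji using Int.leInduction with
  | base => simp
  | succ n hjn ih =>
    rw [sum_Ioc_eq_sum_Ioc_sub_one_add _ (by omega), add_sub_cancel_right, h.eq_max (n + 1),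
      add_sub_cancel_right]
    exact le_max_of_le_left (by linarith)

variable (hX : ∀ i, Tendsto (fun j => ∑ k ∈ Ioc j i, ((X k : ℤ) - b)) atBot atBot)
include hX

theorem sol2Q_le (h : SolvesProbing b X H Q) (i : ℤ) : sol2Q b X i ≤ Q i := by
  obtain ⟨j, hji, -, hQ⟩ := exists_sol2Q_eq hX i
  have hQj : 0 ≤ Q j := by rw [(h j).2]; exact le_max_right _ _
  have := h.add_sum_Ioc_le hji
  omega

theorem sol2H_le (h : SolvesProbing b X H Q) (i : ℤ) : sol2H b X i ≤ H i := by
  rw [sol2H_eq_add_sol2Q hX, (h i).1]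
  gcongr
  exact h.sol2Q_le hX (i - 1)

theorem le_sol2Q (h : SolvesProbing b X H Q) {i₀ i : ℤ} (hi : i₀ ≤ i) (hQ : Q i₀ = 0) :
    Q i ≤ sol2Q b X i := by
  induction i, hi using Int.leInduction with
  | base => rw [hQ]; exact sol2Q_nonneg hX i₀
  | succ n _ ih =>
    rw [h.eq_max, (solvesProbing_sol2 hX).eq_max, add_sub_cancel_right]
    exact max_le_max_right 0 (by linarith)

theorem eq_sol2 (h : SolvesProbing b X H Q) (hzero : ∀ i, ∃ i₀ < i, Q i₀ = 0) :
    H = sol2H b X ∧ Q = sol2Q b X := by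
  have hQ : Q = sol2Q b X := funext fun i => by
    obtain ⟨i₀, hi₀, hQi₀⟩ := hzero i
    exact (h.le_sol2Q hX hi₀.le hQi₀).antisymm (h.sol2Q_le hX i)
  refine ⟨funext fun i => ?_, hQ⟩
  rw [(h i).1, sol2H_eq_add_sol2Q hX, hQ]

end SolvesProbing

theorem stmt_2_general (b : ℕ) (X : ℤ → ℕ)
    (hX : Filter.Tendsto (fun N : ℕ => ∑ i ∈ Finset.range N, ((b : ℤ) - (X (-(i : ℤ)) : ℤ)))
      Filter.atTop Filter.atTop) :
    -- the suprema are attained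
    (∀ i : ℤ, ∃ j < i, (∀ j' < i,
        (∑ k ∈ Finset.Ioc j' i, ((X k : ℤ) - (b : ℤ))) ≤
          ∑ k ∈ Finset.Ioc j i, ((X k : ℤ) - (b : ℤ))) ∧
        sol2H b X i = (b : ℤ) + ∑ k ∈ Finset.Ioc j i, ((X k : ℤ) - (b : ℤ))) ∧
    (∀ i : ℤ, ∃ j ≤ i, (∀ j' ≤ i,
        (∑ k ∈ Finset.Ioc j' i, ((X k : ℤ) - (b : ℤ))) ≤
          ∑ k ∈ Finset.Ioc j i, ((X k : ℤ) - (b : ℤ))) ∧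
        sol2Q b X i = ∑ k ∈ Finset.Ioc j i, ((X k : ℤ) - (b : ℤ))) ∧
    -- they solve the equations
    (∀ i : ℤ, sol2H b X i = (X i : ℤ) + sol2Q b X (i - 1) ∧
        sol2Q b X i = max (sol2H b X i - (b : ℤ)) 0) ∧
    -- minimality among all solutions
    (∀ H Q : ℤ → ℤ,
      (∀ i : ℤ, H i = (X i : ℤ) + Q (i - 1) ∧ Q i = max (H i - (b : ℤ)) 0) →
      ∀ i : ℤ, sol2H b X i ≤ H i ∧ sol2Q b X i ≤ Q i) ∧
    -- for every `i` there is `i₀ < i` with `H_{i₀} < b`, hence `Q_{i₀} = 0`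
    (∀ i : ℤ, ∃ i₀ < i, sol2H b X i₀ < (b : ℤ) ∧ sol2Q b X i₀ = 0) ∧
    -- uniqueness among the solutions with `Q_{i₀} = 0` for some `i₀ < i`, for each `i`
    (∀ H Q : ℤ → ℤ,
      (∀ i : ℤ, H i = (X i : ℤ) + Q (i - 1) ∧ Q i = max (H i - (b : ℤ)) 0) →
      (∀ i : ℤ, ∃ i₀ < i, Q i₀ = 0) →
      H = sol2H b X ∧ Q = sol2Q b X) := by
  have hS : ∀ i, Tendsto (fun j => ∑ k ∈ Ioc j i, ((X k : ℤ) - b)) atBot atBot :=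
    tendsto_sum_Ioc_atBot <| (tendsto_neg_atTop_atBot.comp hX).congr fun N => by
      simp only [Function.comp_apply, ← sum_neg_distrib, neg_sub]
  refine ⟨fun i => ?_, exists_sol2Q_eq hS, solvesProbing_sol2 hS,
    fun H Q (h : SolvesProbing b X H Q) i => ⟨h.sol2H_le hS i, h.sol2Q_le hS i⟩,
    exists_sol2H_lt_and_sol2Q_eq_zero hS, fun H Q (h : SolvesProbing b X H Q) => h.eq_sol2 hS⟩
  obtain ⟨j, hji, hj, hH, -⟩ := exists_sol2H_eq_and_sol2Q_sub_one_eq hS i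
  exact ⟨j, hji, hj, hH⟩

/-- two-sided equations: existence, minimality and uniqueness. -/
theorem stmt_2 (b : ℕ) (hb : 1 ≤ b) (X : ℤ → ℕ)
    (hX : Filter.Tendsto (fun N : ℕ => ∑ i ∈ Finset.range N, ((b : ℤ) - (X (-(i : ℤ)) : ℤ)))
      Filter.atTop Filter.atTop) :
    -- the suprema are attained
    (∀ i : ℤ, ∃ j < i, (∀ j' < i,
        (∑ k ∈ Finset.Ioc j' i, ((X k : ℤ) - (b : ℤ))) ≤
          ∑ k ∈ Finset.Ioc j i, ((X k : ℤ) - (b : ℤ))) ∧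
        sol2H b X i = (b : ℤ) + ∑ k ∈ Finset.Ioc j i, ((X k : ℤ) - (b : ℤ))) ∧
    (∀ i : ℤ, ∃ j ≤ i, (∀ j' ≤ i,
        (∑ k ∈ Finset.Ioc j' i, ((X k : ℤ) - (b : ℤ))) ≤
          ∑ k ∈ Finset.Ioc j i, ((X k : ℤ) - (b : ℤ))) ∧
        sol2Q b X i = ∑ k ∈ Finset.Ioc j i, ((X k : ℤ) - (b : ℤ))) ∧
    -- they solve the equations
    (∀ i : ℤ, sol2H b X i = (X i : ℤ) + sol2Q b X (i - 1) ∧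
        sol2Q b X i = max (sol2H b X i - (b : ℤ)) 0) ∧
    -- minimality among all solutions
    (∀ H Q : ℤ → ℤ,
      (∀ i : ℤ, H i = (X i : ℤ) + Q (i - 1) ∧ Q i = max (H i - (b : ℤ)) 0) →
      ∀ i : ℤ, sol2H b X i ≤ H i ∧ sol2Q b X i ≤ Q i) ∧
    -- for every `i` there is `i₀ < i` with `H_{i₀} < b`, hence `Q_{i₀} = 0`
    (∀ i : ℤ, ∃ i₀ < i, sol2H b X i₀ < (b : ℤ) ∧ sol2Q b X i₀ = 0) ∧
    -- uniqueness among the solutions with `Q_{i₀} = 0` for some `i₀ < i`, for each `i`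
    (∀ H Q : ℤ → ℤ,
      (∀ i : ℤ, H i = (X i : ℤ) + Q (i - 1) ∧ Q i = max (H i - (b : ℤ)) 0) →
      (∀ i : ℤ, ∃ i₀ < i, Q i₀ = 0) →
      H = sol2H b X ∧ Q = sol2Q b X) :=
  stmt_2_general b X hX
end

section
/- Let b ≥ 1 and α₁ < 1. Then there exist constants C < ∞ and c > 0 such that for all m ≥ 1, all n with n/(bm) ≤ α₁, and all i, in the exact model E[e^{c H_{m,n;i}}] ≤ C and E[e^{c Q_{m,n;i}}] ≤ C. -/
open MeasureTheory ProbabilityTheory Filter Finset Complex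

/-!
Since `n ≤ b m`, a full period of `X - b` has nonpositive sum, so the overflow `Q_i` is the
largest of the `m` window sums `S_t - b t` (`0 ≤ t < m`), where `S_t` counts the keys hashing into
the `t` buckets ending at `i`. Each `S_t` is binomial with parameters `n` and `t/m`, so
`E e^{c (S_t - b t)} ≤ exp (b t (α (e^c - 1) - c))` for `n ≤ α b m`. Since `α < 1`, the
exponent is negative for small `c > 0`, and summing over `t` gives a geometric series. Finally
`H_i ≤ Q_i + b`.
-/

lemma sum_Ioc_add_sum_Ioc_s4 {ι M : Type*} [LinearOrder ι] [LocallyFiniteOrder ι]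
    [AddCommMonoid M] (f : ι → M) {a b c : ι} (hab : a ≤ b) (hbc : b ≤ c) :
    ∑ k ∈ Ioc a b, f k + ∑ k ∈ Ioc b c, f k = ∑ k ∈ Ioc a c, f k := by
  rw [← Ioc_union_Ioc_eq_Ioc hab hbc, sum_union (Ioc_disjoint_Ioc_of_le le_rfl)]

lemma exists_lt_sum_Ioc_le {M : Type*} [AddCommMonoid M] [PartialOrder M]
    [IsOrderedAddMonoid M] (f : ℤ → M) {m : ℕ} (hm : 0 < m)
    (hper : ∀ j : ℤ, ∑ k ∈ Ioc j (j + m), f k ≤ 0)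
    (i : ℤ) (d : ℕ) :
    ∃ t < m, ∑ k ∈ Ioc (i - d) i, f k ≤ ∑ k ∈ Ioc (i - t) i, f k := by
  induction d using Nat.strong_induction_on with
  | _ d ih =>
    by_cases hd : d < m
    · exact ⟨d, hd, le_rfl⟩
    obtain ⟨t, ht, hle⟩ := ih (d - m) (by omega)
    refine ⟨t, ht, le_trans ?_ hle⟩
    have hshift : i - d + m = i - (d - m : ℕ) := by omega
    calc ∑ k ∈ Ioc (i - d) i, f k
        = ∑ k ∈ Ioc (i - d) (i - d + m), f k + ∑ k ∈ Ioc (i - d + m) i, f k :=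
          (sum_Ioc_add_sum_Ioc_s4 f (by omega) (by omega)).symm
      _ ≤ 0 + ∑ k ∈ Ioc (i - (d - m : ℕ)) i, f k := by
          rw [hshift]
          gcongr
          simpa [hshift] using hper (i - d)
      _ = ∑ k ∈ Ioc (i - (d - m : ℕ)) i, f k := zero_add _

lemma sum_exp_mul_card_filter_mem {β : Type*} [Fintype β] [DecidableEq β] (W : Finset β)
    (c : ℝ) (n : ℕ) :
    ∑ h : Fin n → β, Real.exp (c * #{k | h k ∈ W})
      = ((Fintype.card β : ℝ) - #W + #W * Real.exp c) ^ n := by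
  have hprod : ∀ h : Fin n → β,
      Real.exp (c * #{k | h k ∈ W}) = ∏ k, if h k ∈ W then Real.exp c else 1 := by
    intro h
    rw [← prod_filter, prod_const, ← Real.exp_nat_mul, mul_comm]
  have hsum : ∑ x : β, (if x ∈ W then Real.exp c else 1)
      = (Fintype.card β : ℝ) - #W + #W * Real.exp c := by
    have hsplit : ∀ x : β, (if x ∈ W then Real.exp c else 1)
        = 1 + if x ∈ W then Real.exp c - 1 else 0 := by
      intro x; split_ifs <;> ring
    simp_rw [hsplit, sum_add_distrib, sum_ite_mem, univ_inter, sum_const, card_univ]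
    simp only [nsmul_eq_mul, mul_one]
    ring
  simp_rw [hprod, ← hsum, Fintype.sum_pow]

lemma tsum_exp_mul_card_fiber_div {α : Type*} [Fintype α] (G : α → ℤ) (hG : ∀ a, 0 ≤ G a)
    (c M : ℝ) :
    ∑' k : ℕ, Real.exp (c * k) * ((Nat.card {a // G a = k} : ℝ) / M)
      = (∑ a, Real.exp (c * G a)) / M := by
  classical
  have hcard : ∀ k : ℕ, Nat.card {a // G a = k} = #{a | (G a).toNat = k} := by
    intro k
    rw [Nat.card_eq_fintype_card, Fintype.card_subtype]
    congr 1; ext a; simp only [mem_filter, mem_univ, true_and]; have := hG a; omega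
  have hexp : ∀ a, Real.exp (c * G a) = Real.exp (c * (G a).toNat) := by
    intro a; congr 2; exact_mod_cast (Int.toNat_of_nonneg (hG a)).symm
  simp_rw [hcard, hexp, ← mul_div_assoc, tsum_div_const]
  rw [sum_comp (fun k : ℕ ↦ Real.exp (c * k)),
    tsum_eq_sum (s := univ.image fun a ↦ (G a).toNat)]
  · simp [mul_comm]
  · intro k hk
    simp only [mem_image, mem_univ, true_and, not_exists] at hk
    simp [hk]

section ExactModel

variable {m n : ℕ} (h : Fin n → ZMod m)

lemma Xex_eq_card (k : ℤ) : Xex m n h k = #{key | h key = (k : ZMod m)} := by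
  rw [Xex, Nat.card_eq_fintype_card, Fintype.card_subtype]

lemma injOn_intCast_Ioc {j i : ℤ} (hlen : i - j ≤ m) :
    Set.InjOn (Int.cast : ℤ → ZMod m) (Ioc j i) := by
  intro a ha a' ha' heq
  simp only [coe_Ioc, Set.mem_Ioc] at ha ha'
  have hdvd : (m : ℤ) ∣ a' - a := ((ZMod.intCast_eq_intCast_iff a a' m).mp heq).dvd
  have := Int.eq_zero_of_abs_lt_dvd hdvd (by rw [abs_lt]; omega)
  omega

lemma card_image_intCast_Ioc {j i : ℤ} (hlen : i - j ≤ m) :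
    #((Ioc j i).image (Int.cast : ℤ → ZMod m)) = (i - j).toNat := by
  rw [card_image_of_injOn (injOn_intCast_Ioc hlen), Int.card_Ioc]

lemma sum_Xex_Ioc {j i : ℤ} (hlen : i - j ≤ m) :
    ∑ k ∈ Ioc j i, Xex m n h k
      = #{key | h key ∈ (Ioc j i).image (Int.cast : ℤ → ZMod m)} := by
  rw [← sum_card_fiberwise_eq_card_filter,
    sum_image fun _ ha _ ha' ↦ injOn_intCast_Ioc hlen ha ha']
  simp_rw [Xex_eq_card]

lemma sum_Xex_Ioc_le {j i : ℤ} (hlen : i - j ≤ m) : ∑ k ∈ Ioc j i, Xex m n h k ≤ n := by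
  rw [sum_Xex_Ioc h hlen]
  exact (card_filter_le _ _).trans (card_fin n).le

variable [NeZero m]

lemma sum_Xex_Ioc_add (j : ℤ) : ∑ k ∈ Ioc j (j + m), Xex m n h k = n := by
  have hlen : j + m - j ≤ m := by omega
  have huniv : (Ioc j (j + m)).image (Int.cast : ℤ → ZMod m) = univ :=
    eq_univ_of_card _ (by rw [card_image_intCast_Ioc hlen, ZMod.card]; omega)
  rw [sum_Xex_Ioc h hlen, huniv]
  simp

end ExactModel

section Overflow

variable (b : ℕ) {m n : ℕ} (h : Fin n → ZMod m)

lemma sum_Ioc_Xex_sub {j i : ℤ} (hji : j ≤ i) :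
    ∑ k ∈ Ioc j i, ((Xex m n h k : ℤ) - b)
      = (∑ k ∈ Ioc j i, Xex m n h k : ℕ) - b * (i - j) := by
  rw [sum_sub_distrib, sum_const, Int.card_Ioc, nsmul_eq_mul, Int.toNat_of_nonneg (by omega)]
  push_cast
  ring

lemma sum_Ioc_Xex_sub_le_of_le {j i : ℤ} (hji : j ≤ i) (hlen : i - j ≤ m) :
    ∑ k ∈ Ioc j i, ((Xex m n h k : ℤ) - b) ≤ n := by
  have hwindow : ((∑ k ∈ Ioc j i, Xex m n h k : ℕ) : ℤ) ≤ n := by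
    exact_mod_cast sum_Xex_Ioc_le h hlen
  have hb : (0 : ℤ) ≤ b * (i - j) := mul_nonneg (by positivity) (by omega)
  rw [sum_Ioc_Xex_sub b h hji]
  linarith

variable [NeZero m]

lemma exists_lt_sum_Ioc_Xex_sub_le (hn : n ≤ b * m) (i : ℤ) (d : ℕ) :
    ∃ t < m, ∑ k ∈ Ioc (i - d) i, ((Xex m n h k : ℤ) - b)
      ≤ ∑ k ∈ Ioc (i - t) i, ((Xex m n h k : ℤ) - b) := by
  refine exists_lt_sum_Ioc_le _ (NeZero.pos m) (fun j ↦ ?_) i d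
  rw [sum_Ioc_Xex_sub b h (by omega), sum_Xex_Ioc_add]
  nlinarith

lemma bddAbove_Qex_set (hn : n ≤ b * m) (i : ℤ) :
    BddAbove {x : ℤ | ∃ j ≤ i, x = ∑ k ∈ Ioc j i, ((Xex m n h k : ℤ) - b)} := by
  refine ⟨n, ?_⟩
  rintro x ⟨j, hji, rfl⟩
  obtain ⟨t, ht, hle⟩ := exists_lt_sum_Ioc_Xex_sub_le b h hn i (i - j).toNat
  rw [Int.toNat_of_nonneg (by omega), sub_sub_cancel] at hle
  exact hle.trans (sum_Ioc_Xex_sub_le_of_le b h (by omega) (by omega))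

lemma le_Qex (hn : n ≤ b * m) {j i : ℤ} (hji : j ≤ i) :
    ∑ k ∈ Ioc j i, ((Xex m n h k : ℤ) - b) ≤ Qex b m n h i :=
  le_csSup (bddAbove_Qex_set b h hn i) ⟨j, hji, rfl⟩

lemma exists_Qex_eq (hn : n ≤ b * m) (i : ℤ) :
    ∃ j ≤ i, Qex b m n h i = ∑ k ∈ Ioc j i, ((Xex m n h k : ℤ) - b) :=
  Int.csSup_mem (s := {x : ℤ | ∃ j ≤ i, x = ∑ k ∈ Ioc j i, ((Xex m n h k : ℤ) - b)})
    ⟨0, i, le_rfl, by simp⟩ (bddAbove_Qex_set b h hn i)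

lemma Qex_nonneg (hn : n ≤ b * m) (i : ℤ) : 0 ≤ Qex b m n h i := by
  simpa using le_Qex b h hn (le_refl i)

lemma exists_Qex_le (hn : n ≤ b * m) (i : ℤ) :
    ∃ t < m, Qex b m n h i ≤ (∑ k ∈ Ioc (i - t) i, Xex m n h k : ℕ) - b * t := by
  obtain ⟨j, hji, hQ⟩ := exists_Qex_eq b h hn i
  obtain ⟨t, ht, hle⟩ := exists_lt_sum_Ioc_Xex_sub_le b h hn i (i - j).toNat
  rw [Int.toNat_of_nonneg (by omega), sub_sub_cancel, ← hQ,
    sum_Ioc_Xex_sub b h (by omega), sub_sub_cancel] at hle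
  exact ⟨t, ht, hle⟩

lemma Qex_sub_one_add_le (hn : n ≤ b * m) (i : ℤ) :
    Qex b m n h (i - 1) + Xex m n h i - b ≤ Qex b m n h i := by
  obtain ⟨j, hji, hQ⟩ := exists_Qex_eq b h hn (i - 1)
  have hsingle : Ioc (i - 1) i = {i} := by ext; simp; omega
  have hstep := sum_Ioc_add_sum_Ioc_s4 (fun k ↦ (Xex m n h k : ℤ) - b) hji (by omega : i - 1 ≤ i)
  rw [← hQ, hsingle, sum_singleton] at hstep
  linarith [le_Qex b h hn (by omega : j ≤ i)]

lemma Hex_le (hn : n ≤ b * m) (i : ℤ) : Hex b m n h i ≤ Qex b m n h i + b := by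
  have := Qex_sub_one_add_le b h hn i
  rw [Hex]
  omega

lemma Hex_nonneg (hn : n ≤ b * m) (i : ℤ) : 0 ≤ Hex b m n h i := by
  have := Qex_nonneg b h hn (i - 1)
  rw [Hex]
  omega

end Overflow

section MomentBounds

lemma exists_pos_mul_exp_sub_one_lt {β : ℝ} (hβ : β < 1) :
    ∃ c > 0, β * (Real.exp c - 1) < c := by
  set β' := max β (1 / 2)
  have hβ'0 : 0 < β' := lt_max_of_lt_right (by norm_num)
  have hβ'1 : β' < 1 := max_lt hβ (by norm_num)
  -- `c = -log β'` gives `β' (e^c - 1) = 1 - β' < -log β'`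
  refine ⟨-Real.log β', neg_pos.2 (Real.log_neg hβ'0 hβ'1), ?_⟩
  have hexp : Real.exp (-Real.log β') = β'⁻¹ := by rw [Real.exp_neg, Real.exp_log hβ'0]
  calc β * (Real.exp (-Real.log β') - 1) ≤ β' * (Real.exp (-Real.log β') - 1) := by
        gcongr
        · rw [hexp, sub_nonneg]
          exact one_le_inv₀ hβ'0 |>.2 hβ'1.le
        · exact le_max_left _ _
    _ = 1 - β' := by rw [hexp, mul_sub, mul_inv_cancel₀ hβ'0.ne', mul_one]
    _ < -Real.log β' := by linarith [Real.log_lt_sub_one_of_pos hβ'0 hβ'1.ne]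

lemma exp_neg_mul_mul_pow_div_le {b m n t : ℕ} {c β : ℝ} (hm : 0 < m) (hc : 0 ≤ c)
    (hn : (n : ℝ) ≤ β * (b * m)) :
    Real.exp (-(c * b * t)) * (((m : ℝ) - t + t * Real.exp c) ^ n / (m : ℝ) ^ n)
      ≤ Real.exp (b * (β * (Real.exp c - 1) - c)) ^ t := by
  have hm' : (0 : ℝ) < m := by exact_mod_cast hm
  have hec : 0 ≤ Real.exp c - 1 := by linarith [Real.one_le_exp hc]
  set x : ℝ := t * (Real.exp c - 1) / m with hx
  have hbase : ((m : ℝ) - t + t * Real.exp c) ^ n / (m : ℝ) ^ n = (1 + x) ^ n := by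
    rw [← div_pow, hx]
    congr 1
    field_simp
    ring
  have hpow : (1 + x) ^ n ≤ Real.exp (n * x) := by
    rw [Real.exp_nat_mul]
    exact pow_le_pow_left₀ (by positivity) (by linarith [Real.add_one_le_exp x]) n
  have hnx : n * x ≤ β * b * t * (Real.exp c - 1) := by
    rw [hx, mul_div_assoc', div_le_iff₀ hm']
    nlinarith [mul_le_mul_of_nonneg_right hn (by positivity : (0 : ℝ) ≤ t * (Real.exp c - 1))]
  calc Real.exp (-(c * b * t)) * (((m : ℝ) - t + t * Real.exp c) ^ n / (m : ℝ) ^ n)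
      ≤ Real.exp (-(c * b * t)) * Real.exp (β * b * t * (Real.exp c - 1)) := by
        rw [hbase]
        gcongr
        exact hpow.trans (Real.exp_le_exp.2 hnx)
    _ = Real.exp (b * (β * (Real.exp c - 1) - c)) ^ t := by
        rw [← Real.exp_add, ← Real.exp_nat_mul]
        ring_nf

variable {m n : ℕ} [NeZero m]

lemma sum_exp_sum_Xex_Ioc (i : ℤ) {t : ℕ} (ht : t ≤ m) (c : ℝ) :
    ∑ h : Fin n → ZMod m, Real.exp (c * (∑ k ∈ Ioc (i - t) i, Xex m n h k : ℕ))
      = ((m : ℝ) - t + t * Real.exp c) ^ n := by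
  have hlen : i - (i - t) ≤ m := by omega
  simp_rw [sum_Xex_Ioc _ hlen, sum_exp_mul_card_filter_mem, ZMod.card,
    card_image_intCast_Ioc hlen, sub_sub_cancel, Int.toNat_natCast]

lemma exp_Qex_le_sum (b : ℕ) (h : Fin n → ZMod m) (hn : n ≤ b * m) {c : ℝ} (hc : 0 ≤ c)
    (i : ℤ) :
    Real.exp (c * Qex b m n h i) ≤ ∑ t ∈ range m,
      Real.exp (-(c * b * t)) * Real.exp (c * (∑ k ∈ Ioc (i - t) i, Xex m n h k : ℕ)) := by
  obtain ⟨t, ht, hQ⟩ := exists_Qex_le b h hn i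
  have hQ' : (Qex b m n h i : ℝ) ≤ (∑ k ∈ Ioc (i - t) i, Xex m n h k : ℕ) - b * t := by
    exact_mod_cast hQ
  refine le_trans ?_ (single_le_sum (fun t _ ↦ by positivity) (mem_range.2 ht))
  rw [← Real.exp_add]
  gcongr
  nlinarith

lemma sum_exp_Qex_div_le (b : ℕ) (hnbm : n ≤ b * m) {β c : ℝ} (hc : 0 ≤ c)
    (hn : (n : ℝ) ≤ β * (b * m)) (i : ℤ) :
    (∑ h : Fin n → ZMod m, Real.exp (c * Qex b m n h i)) / (m : ℝ) ^ n
      ≤ ∑ t ∈ range m, Real.exp (b * (β * (Real.exp c - 1) - c)) ^ t := by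
  calc (∑ h : Fin n → ZMod m, Real.exp (c * Qex b m n h i)) / (m : ℝ) ^ n
      ≤ (∑ t ∈ range m, Real.exp (-(c * b * t)) * ((m : ℝ) - t + t * Real.exp c) ^ n)
          / (m : ℝ) ^ n := by
        gcongr
        refine (sum_le_sum fun h _ ↦ exp_Qex_le_sum b h hnbm hc i).trans_eq ?_
        rw [sum_comm]
        refine sum_congr rfl fun t ht ↦ ?_
        rw [← mul_sum, sum_exp_sum_Xex_Ioc i (mem_range.1 ht).le]
    _ ≤ ∑ t ∈ range m, Real.exp (b * (β * (Real.exp c - 1) - c)) ^ t := by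
        rw [sum_div]
        gcongr with t
        rw [mul_div_assoc]
        exact exp_neg_mul_mul_pow_div_le (NeZero.pos m) hc hn

lemma sum_exp_Hex_le (b : ℕ) (hn : n ≤ b * m) {c : ℝ} (hc : 0 ≤ c) (i : ℤ) :
    ∑ h : Fin n → ZMod m, Real.exp (c * Hex b m n h i)
      ≤ Real.exp (c * b) * ∑ h : Fin n → ZMod m, Real.exp (c * Qex b m n h i) := by
  rw [mul_sum]
  gcongr with h
  rw [← Real.exp_add]
  have : (Hex b m n h i : ℝ) ≤ Qex b m n h i + b := by exact_mod_cast Hex_le b h hn i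
  gcongr
  nlinarith

end MomentBounds

/-- uniform exponential moment bounds in the exact model. -/
theorem stmt_4 (b : ℕ) (hb : 1 ≤ b) (α₁ : ℝ) (hα₁ : α₁ < 1) :
    ∃ C c : ℝ, 0 < c ∧ ∀ m n : ℕ, 1 ≤ m → (n : ℝ) / ((b : ℝ) * (m : ℝ)) ≤ α₁ → ∀ i : ℤ,
      (∑' k : ℕ, Real.exp (c * k) *
          ((Nat.card {h : Fin n → ZMod m // Hex b m n h i = (k : ℤ)} : ℝ) / (m : ℝ) ^ n)) ≤ C ∧
      (∑' k : ℕ, Real.exp (c * k) *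
          ((Nat.card {h : Fin n → ZMod m // Qex b m n h i = (k : ℤ)} : ℝ) / (m : ℝ) ^ n)) ≤ C := by
  obtain ⟨c, hc, hκ⟩ := exists_pos_mul_exp_sub_one_lt hα₁
  set r := Real.exp (b * (α₁ * (Real.exp c - 1) - c))
  have hr : r < 1 :=
    Real.exp_lt_one_iff.2 (mul_neg_of_pos_of_neg (by exact_mod_cast hb) (by linarith))
  refine ⟨Real.exp (c * b) * (1 - r)⁻¹, c, hc, fun m n hm hnm i ↦ ?_⟩
  have : NeZero m := ⟨by omega⟩
  have hn : (n : ℝ) ≤ α₁ * (b * m) := (div_le_iff₀ (by positivity)).1 hnm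
  have hnbm : n ≤ b * m := by
    have : (n : ℝ) ≤ b * m := by nlinarith [(by positivity : (0 : ℝ) ≤ b * m)]
    exact_mod_cast this
  have hQ : (∑ h : Fin n → ZMod m, Real.exp (c * Qex b m n h i)) / (m : ℝ) ^ n
      ≤ (1 - r)⁻¹ := by
    have hgeom := geom_sum_Ico_le_of_lt_one (m := 0) (n := m) (Real.exp_nonneg _) hr
    rw [← range_eq_Ico, pow_zero, one_div] at hgeom
    exact (sum_exp_Qex_div_le b hnbm hc.le hn i).trans hgeom
  rw [tsum_exp_mul_card_fiber_div _ (Hex_nonneg b · hnbm i),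
    tsum_exp_mul_card_fiber_div _ (Qex_nonneg b · hnbm i)]
  have hecb : 1 ≤ Real.exp (c * b) := Real.one_le_exp (by positivity)
  refine ⟨?_, hQ.trans (le_mul_of_one_le_left (by positivity) hecb)⟩
  refine (div_le_div_of_nonneg_right (sum_exp_Hex_le b hnbm hc.le i) (by positivity)).trans ?_
  rw [mul_div_assoc]
  gcongr
end
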